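/- arXiv:1405.7286 — 3 statements merged into one kernel-verified Lean document; each statement's English description precedes it below -/
import Mathlib

section
/- Let m ≥ 1, P(m) = {g ∈ GL_3(O_F) : g₃₁, g₃₂ ∈ ϖ^m O_F}, and N_l the lower (1,2)-block unipotent subgroup. Then the inclusion N_l ∩ P(m) ↪ P(m) induces a bijection (N_l ∩ P(m))/(N_l ∩ P(m+1)) ≅ P(m)/P(m+1), and both quotients have cardinality q² where q = |O_F/ϖ|; moreover the quotient is isomorphic as an abelian group to (O_F/ϖ)², hence the restriction to N_l ∩ P(m) of the regular representation of P(m)/P(m+1) decomposes as the direct sum of the q² characters of (N_l ∩ P(m))/(N_l ∩ P(m+1)), each with multiplicity one. -/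
/-!
For `g ∈ P(m)` with `m ≥ 1` the entries `g₂₀, g₂₁` lie in the maximal ideal, so `det g` is
congruent to `Δ g₂₂`, where `Δ` is the determinant of the upper-left `2 × 2` block; hence `Δ` is
a unit. Solving `(a, b) · [[g₀₀, g₀₁], [g₁₀, g₁₁]] = (g₂₀, g₂₁)` gives `a, b ∈ ϖ^m O`, and the
lower unipotent `n` with bottom row `(a, b, 1)` has `(n⁻¹ g)₂₀ = (n⁻¹ g)₂₁ = 0`. So
`N_l ∩ P(m) → P(m)/P(m+1)` is onto, and it is injective modulo `N_l ∩ P(m+1)` since `N_l` is a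
group. The map `(a, b) ↦ [[1,0,0],[0,1,0],[ϖ^m a, ϖ^m b, 1]]` is an isomorphism
`O × O ≅ N_l ∩ P(m)` carrying `𝔪 × 𝔪` onto `N_l ∩ P(m+1)`, whence the quotient `(O/𝔪)²`.

An abelian group `A` has exactly `|A|` complex characters: for finite `A` by duality; for
infinite `A` because characters separate points (`ℚ/ℤ` is an injective cogenerator), so `A`
embeds in its double dual, which would be finite if the dual were.
-/

open Matrix

/-- The congruence "parahoric" subgroup `P(m) ⊆ GL₃(O)`: invertible integral matrices
whose two bottom-left entries lie in `ϖ^m O`. -/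
def Pm (O : Type) [CommRing O] [IsDomain O] [IsDiscreteValuationRing O] (ϖ : O) (m : ℕ) :
    Subgroup (Matrix (Fin 3) (Fin 3) O)ˣ where
  carrier := {g | ϖ ^ m ∣ (g : Matrix (Fin 3) (Fin 3) O) 2 0 ∧
    ϖ ^ m ∣ (g : Matrix (Fin 3) (Fin 3) O) 2 1}
  one_mem' := by
    constructor <;> simp [Matrix.one_apply]
  mul_mem' := by
    rintro a b ⟨ha0, ha1⟩ ⟨hb0, hb1⟩
    constructor <;> simp only [Units.val_mul, Matrix.mul_apply, Fin.sum_univ_three]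
    · exact dvd_add (dvd_add (ha0.mul_right _) (ha1.mul_right _)) (hb0.mul_left _)
    · exact dvd_add (dvd_add (ha0.mul_right _) (ha1.mul_right _)) (hb1.mul_left _)
  inv_mem' := by
    rintro a ⟨ha0, ha1⟩
    have h : ((a⁻¹ : (Matrix (Fin 3) (Fin 3) O)ˣ) : Matrix (Fin 3) (Fin 3) O)
        = (a : Matrix (Fin 3) (Fin 3) O)⁻¹ := (Matrix.coe_units_inv a)
    have h20 : ((a⁻¹ : (Matrix (Fin 3) (Fin 3) O)ˣ) : Matrix (Fin 3) (Fin 3) O) 2 0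
        = Ring.inverse (a : Matrix (Fin 3) (Fin 3) O).det *
          ((a : Matrix (Fin 3) (Fin 3) O) 1 0 * (a : Matrix (Fin 3) (Fin 3) O) 2 1
            - (a : Matrix (Fin 3) (Fin 3) O) 1 1 * (a : Matrix (Fin 3) (Fin 3) O) 2 0) := by
      rw [h, Matrix.inv_def, Matrix.adjugate_fin_three]
      simp
    have h21 : ((a⁻¹ : (Matrix (Fin 3) (Fin 3) O)ˣ) : Matrix (Fin 3) (Fin 3) O) 2 1
        = Ring.inverse (a : Matrix (Fin 3) (Fin 3) O).det *
          (-((a : Matrix (Fin 3) (Fin 3) O) 0 0 * (a : Matrix (Fin 3) (Fin 3) O) 2 1)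
            + (a : Matrix (Fin 3) (Fin 3) O) 0 1 * (a : Matrix (Fin 3) (Fin 3) O) 2 0) := by
      rw [h, Matrix.inv_def, Matrix.adjugate_fin_three]
      simp
    constructor
    · rw [h20]
      exact ((dvd_sub (ha1.mul_left _) (ha0.mul_left _)).mul_left _)
    · rw [h21]
      exact ((dvd_add (dvd_neg.mpr (ha1.mul_left _)) (ha0.mul_left _)).mul_left _)

/-- The lower `(1,2)`-block unipotent subgroup `N_l ⊆ GL₃(O)`. -/
def Nl (O : Type) [CommRing O] [IsDomain O] [IsDiscreteValuationRing O] :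
    Subgroup (Matrix (Fin 3) (Fin 3) O)ˣ where
  carrier := {g | (g : Matrix (Fin 3) (Fin 3) O) 0 0 = 1 ∧
    (g : Matrix (Fin 3) (Fin 3) O) 1 1 = 1 ∧ (g : Matrix (Fin 3) (Fin 3) O) 2 2 = 1 ∧
    (g : Matrix (Fin 3) (Fin 3) O) 0 1 = 0 ∧ (g : Matrix (Fin 3) (Fin 3) O) 0 2 = 0 ∧
    (g : Matrix (Fin 3) (Fin 3) O) 1 0 = 0 ∧ (g : Matrix (Fin 3) (Fin 3) O) 1 2 = 0}
  one_mem' := by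
    refine ⟨?_, ?_, ?_, ?_, ?_, ?_, ?_⟩ <;> simp [Matrix.one_apply]
  mul_mem' := by
    rintro a b ⟨ha1, ha2, ha3, ha4, ha5, ha6, ha7⟩ ⟨hb1, hb2, hb3, hb4, hb5, hb6, hb7⟩
    refine ⟨?_, ?_, ?_, ?_, ?_, ?_, ?_⟩ <;>
      simp [Units.val_mul, Matrix.mul_apply, Fin.sum_univ_three,
        ha1, ha2, ha3, ha4, ha5, ha6, ha7, hb1, hb2, hb3, hb4, hb5, hb6, hb7]
  inv_mem' := by
    rintro a ⟨ha1, ha2, ha3, ha4, ha5, ha6, ha7⟩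
    have hdet : (a : Matrix (Fin 3) (Fin 3) O).det = 1 := by
      rw [Matrix.det_fin_three]
      simp [ha1, ha2, ha3, ha4, ha5, ha6, ha7]
    have h : ((a⁻¹ : (Matrix (Fin 3) (Fin 3) O)ˣ) : Matrix (Fin 3) (Fin 3) O)
        = (a : Matrix (Fin 3) (Fin 3) O)⁻¹ := (Matrix.coe_units_inv a)
    refine ⟨?_, ?_, ?_, ?_, ?_, ?_, ?_⟩ <;>
      · rw [h, Matrix.inv_def, Matrix.adjugate_fin_three, hdet]
        simp [ha1, ha2, ha3, ha4, ha5, ha6, ha7]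


open Multiplicative IsLocalRing

local notation "GL₃" O => (Matrix (Fin 3) (Fin 3) O)ˣ

theorem Subgroup.inf_subgroupOf_of_le {G : Type*} [Group G] {N K s : Subgroup G} (h : s ≤ N) :
    (N ⊓ K).subgroupOf s = K.subgroupOf s := by
  rw [subgroupOf_inj, inf_assoc, inf_eq_right.mpr (inf_le_right.trans h)]

noncomputable def Subgroup.quotientSubgroupOfEquivOfLE {G : Type*} [Group G] {s t : Subgroup G}
    (H : Subgroup G) (hst : s ≤ t) (hrep : ∀ g ∈ t, ∃ n ∈ s, n⁻¹ * g ∈ H) :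
    s ⧸ H.subgroupOf s ≃ t ⧸ H.subgroupOf t :=
  Equiv.ofBijective (quotientSubgroupOfEmbeddingOfLE H hst) <| by
    refine ⟨(quotientSubgroupOfEmbeddingOfLE H hst).injective, ?_⟩
    rintro ⟨g, hg⟩
    obtain ⟨n, hn, hng⟩ := hrep g hg
    exact ⟨QuotientGroup.mk ⟨n, hn⟩, QuotientGroup.eq.mpr hng⟩

section Characters

theorem exists_monoidHom_units_complex_apply_ne_one {A : Type*} [AddCommGroup A] {a : A}
    (ha : a ≠ 0) : ∃ ψ : Multiplicative A →* ℂˣ, ψ (ofAdd a) ≠ 1 := by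
  obtain ⟨c, hc⟩ := CharacterModule.exists_character_apply_ne_zero_of_ne_zero ha
  let ι : AddCircle (1 : ℚ) →+ AddCircle (1 : ℝ) :=
    QuotientAddGroup.map _ _ (Rat.castHom ℝ).toAddMonoidHom (by
      rintro _ ⟨n, rfl⟩; exact ⟨n, by simp⟩)
  have hι : ∀ x, ι x = 0 → x = 0 := by
    intro x hx
    obtain ⟨r, rfl⟩ := QuotientAddGroup.mk_surjective x
    obtain ⟨n, hn⟩ := (AddCircle.coe_eq_zero_iff (1 : ℝ)).mp hx
    exact (AddCircle.coe_eq_zero_iff (1 : ℚ)).mpr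
      ⟨n, by rw [zsmul_one]; exact_mod_cast (by simpa using hn : (n : ℝ) = r)⟩
  refine ⟨(Circle.toUnits.compAddChar
    (AddCircle.toCircle_addChar.compAddMonoidHom (ι.comp c))).toMonoidHom, fun h => hc (hι _ ?_)⟩
  apply AddCircle.injective_toCircle one_ne_zero
  rw [AddCircle.toCircle_zero, Circle.ext_iff]
  exact congrArg Units.val h

theorem card_monoidHom_units_complex_of_finite (G : Type*) [CommGroup G] [Finite G] :
    Nat.card (G →* ℂˣ) = Nat.card G :=
  have : NeZero (Monoid.exponent G : ℂ) :=
    ⟨Nat.cast_ne_zero.mpr Monoid.exponent_ne_zero_of_finite⟩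
  CommGroup.card_monoidHom_of_hasEnoughRootsOfUnity G ℂ

theorem card_monoidHom_units_complex (A : Type*) [AddCommGroup A] :
    Nat.card (Multiplicative A →* ℂˣ) = Nat.card A := by
  rcases finite_or_infinite A with hA | hA
  · exact card_monoidHom_units_complex_of_finite (Multiplicative A)
  rw [Nat.card_eq_zero_of_infinite (α := A)]
  by_contra hX
  have : Finite (Multiplicative A →* ℂˣ) := Nat.finite_of_card_ne_zero hX
  have : Finite ((Multiplicative A →* ℂˣ) →* ℂˣ) := Nat.finite_of_card_ne_zero <| by
    rwa [card_monoidHom_units_complex_of_finite]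
  have heval : Function.Injective fun a : A => MonoidHom.eval (N := ℂˣ) (ofAdd a) := by
    intro a b hab
    by_contra hne
    obtain ⟨ψ, hψ⟩ := exists_monoidHom_units_complex_apply_ne_one (sub_ne_zero.mpr hne)
    have hab' : ψ (ofAdd a) = ψ (ofAdd b) := DFunLike.congr_fun hab ψ
    exact hψ (by rw [ofAdd_sub, map_div, hab', div_self'])
  exact not_finite_iff_infinite.mpr hA (Finite.of_injective _ heval)

end Characters

section LowerUnipotent

variable {O : Type} [CommRing O]

def lowerUnipotentMatrix : Multiplicative (O × O) →* Matrix (Fin 3) (Fin 3) O where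
  toFun x := !![1, 0, 0; 0, 1, 0; x.toAdd.1, x.toAdd.2, 1]
  map_one' := by simp [one_fin_three]
  map_mul' x y := by simp [add_comm]

def lowerUnipotent : Multiplicative (O × O) →* GL₃ O :=
  lowerUnipotentMatrix.toHomUnits

@[simp]
theorem coe_lowerUnipotent (x : Multiplicative (O × O)) :
    (lowerUnipotent x).val = !![1, 0, 0; 0, 1, 0; x.toAdd.1, x.toAdd.2, 1] :=
  rfl

theorem lowerUnipotent_injective : Function.Injective (lowerUnipotent (O := O)) := by
  intro x y h
  have h20 := congrArg (fun g : GL₃ O => g.val 2 0) h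
  have h21 := congrArg (fun g : GL₃ O => g.val 2 1) h
  exact toAdd.injective (Prod.ext (by simpa using h20) (by simpa using h21))

theorem lowerUnipotent_inv_mul_apply (x : Multiplicative (O × O)) (g : GL₃ O) (j : Fin 3) :
    ((lowerUnipotent x)⁻¹ * g).val 2 j =
      g.val 2 j - x.toAdd.1 * g.val 0 j - x.toAdd.2 * g.val 1 j := by
  rw [← map_inv, Units.val_mul, coe_lowerUnipotent]
  simp only [toAdd_inv, Prod.fst_neg, Prod.snd_neg, Matrix.mul_apply, Fin.sum_univ_three,
    of_apply, cons_val', cons_val_fin_one, cons_val, cons_val_zero, cons_val_one, neg_mul, one_mul]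
  ring

end LowerUnipotent

theorem isUnit_upperLeft_det_of_mem_maximalIdeal {R : Type*} [CommRing R] [IsLocalRing R]
    {M : Matrix (Fin 3) (Fin 3) R} (hM : IsUnit M.det) (h20 : M 2 0 ∈ maximalIdeal R)
    (h21 : M 2 1 ∈ maximalIdeal R) : IsUnit (M 0 0 * M 1 1 - M 0 1 * M 1 0) := by
  rw [← notMem_maximalIdeal] at hM ⊢
  intro hΔ
  apply hM
  have hdet : M.det = (M 0 0 * M 1 1 - M 0 1 * M 1 0) * M 2 2
      + (M 0 1 * M 1 2 - M 0 2 * M 1 1) * M 2 0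
      + (M 0 2 * M 1 0 - M 0 0 * M 1 2) * M 2 1 := by
    rw [Matrix.det_fin_three]; ring
  rw [hdet]
  exact add_mem (add_mem (Ideal.mul_mem_right _ _ hΔ) (Ideal.mul_mem_left _ _ h20))
    (Ideal.mul_mem_left _ _ h21)

section Parahoric

variable {O : Type} [CommRing O] [IsDomain O] [IsDiscreteValuationRing O]

theorem mem_Pm_iff {ϖ : O} {m : ℕ} {g : GL₃ O} :
    g ∈ Pm O ϖ m ↔ ϖ ^ m ∣ g.val 2 0 ∧ ϖ ^ m ∣ g.val 2 1 :=
  Iff.rfl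

theorem lowerUnipotent_mem_Nl (x : Multiplicative (O × O)) : lowerUnipotent x ∈ Nl O :=
  ⟨rfl, rfl, rfl, rfl, rfl, rfl, rfl⟩

theorem lowerUnipotent_eq_of_mem_Nl {n : GL₃ O} (hn : n ∈ Nl O) :
    lowerUnipotent (ofAdd (n.val 2 0, n.val 2 1)) = n := by
  obtain ⟨h00, h11, h22, h01, h02, h10, h12⟩ := hn
  ext i j
  fin_cases i <;> fin_cases j <;> simp [*]

theorem exists_mem_Nl_inf_Pm_inv_mul_apply_eq_zero {ϖ : O} (hϖ : Irreducible ϖ) {m : ℕ}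
    (hm : 1 ≤ m) {g : GL₃ O} (hg : g ∈ Pm O ϖ m) :
    ∃ n ∈ Nl O ⊓ Pm O ϖ m, (n⁻¹ * g).val 2 0 = 0 ∧ (n⁻¹ * g).val 2 1 = 0 := by
  obtain ⟨⟨w₀, hw₀⟩, ⟨w₁, hw₁⟩⟩ := hg
  have hϖm : ϖ ^ m ∈ maximalIdeal O :=
    Ideal.pow_mem_of_mem _ ((mem_maximalIdeal ϖ).mpr hϖ.not_isUnit) m hm
  have hΔ := isUnit_upperLeft_det_of_mem_maximalIdeal
    ((Matrix.isUnit_iff_isUnit_det _).mp g.isUnit)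
    (hw₀ ▸ Ideal.mul_mem_right _ _ hϖm) (hw₁ ▸ Ideal.mul_mem_right _ _ hϖm)
  let A : Matrix (Fin 2) (Fin 2) O := !![g.val 0 0, g.val 0 1; g.val 1 0, g.val 1 1]
  have hA : IsUnit A := (Matrix.isUnit_iff_isUnit_det A).mpr (by rwa [Matrix.det_fin_two_of])
  obtain ⟨v, hv⟩ := Matrix.vecMul_surjective_iff_isUnit.mpr hA ![w₀, w₁]
  have hv₀ := congrFun hv 0
  have hv₁ := congrFun hv 1
  simp only [Matrix.vecMul, dotProduct, Fin.sum_univ_two, A, Matrix.of_apply, Matrix.cons_val',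
    Matrix.cons_val_zero, Matrix.cons_val_one, Matrix.empty_val', Matrix.cons_val_fin_one]
    at hv₀ hv₁
  refine ⟨lowerUnipotent (ofAdd (ϖ ^ m * v 0, ϖ ^ m * v 1)),
    ⟨lowerUnipotent_mem_Nl _, dvd_mul_right _ _, dvd_mul_right _ _⟩, ?_, ?_⟩ <;>
    rw [lowerUnipotent_inv_mul_apply, toAdd_ofAdd]
  · linear_combination hw₀ - ϖ ^ m * hv₀
  · linear_combination hw₁ - ϖ ^ m * hv₁

theorem exists_mem_Nl_inf_Pm_inv_mul_mem_Pm {ϖ : O} (hϖ : Irreducible ϖ) {m : ℕ} (hm : 1 ≤ m)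
    {g : GL₃ O} (hg : g ∈ Pm O ϖ m) (k : ℕ) : ∃ n ∈ Nl O ⊓ Pm O ϖ m, n⁻¹ * g ∈ Pm O ϖ k := by
  obtain ⟨n, hn, h20, h21⟩ := exists_mem_Nl_inf_Pm_inv_mul_apply_eq_zero hϖ hm hg
  exact ⟨n, hn, mem_Pm_iff.mpr ⟨h20 ▸ dvd_zero _, h21 ▸ dvd_zero _⟩⟩

variable (O) in
def residuePair :
    Multiplicative (O × O) →* Multiplicative ((O ⧸ maximalIdeal O) × (O ⧸ maximalIdeal O)) :=
  AddMonoidHom.toMultiplicative ((Ideal.Quotient.mk _).prodMap (Ideal.Quotient.mk _)).toAddMonoidHom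

theorem residuePair_surjective : Function.Surjective (residuePair O) :=
  (Prod.map_surjective.mpr ⟨Ideal.Quotient.mk_surjective, Ideal.Quotient.mk_surjective⟩).comp
    toAdd.surjective

theorem residuePair_eq_one_iff {ϖ : O} (hϖ : Irreducible ϖ) {x : Multiplicative (O × O)} :
    residuePair O x = 1 ↔ ϖ ∣ x.toAdd.1 ∧ ϖ ∣ x.toAdd.2 := by
  simp [residuePair, Prod.ext_iff, hϖ.maximalIdeal_eq, Ideal.Quotient.eq_zero_iff_mem,
    Ideal.mem_span_singleton]

def scaledLowerUnipotent (ϖ : O) (m : ℕ) : Multiplicative (O × O) →* ↥(Nl O ⊓ Pm O ϖ m) :=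
  (lowerUnipotent.comp (AddMonoidHom.toMultiplicative
    (DistribSMul.toAddMonoidHom (O × O) (ϖ ^ m)))).codRestrict _
    fun _ => ⟨lowerUnipotent_mem_Nl _, dvd_mul_right _ _, dvd_mul_right _ _⟩

@[simp]
theorem coe_scaledLowerUnipotent (ϖ : O) (m : ℕ) (x : Multiplicative (O × O)) :
    (scaledLowerUnipotent ϖ m x : GL₃ O) =
      lowerUnipotent (ofAdd (ϖ ^ m * x.toAdd.1, ϖ ^ m * x.toAdd.2)) :=
  rfl

theorem scaledLowerUnipotent_bijective {ϖ : O} (hϖ : ϖ ≠ 0) (m : ℕ) :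
    Function.Bijective (scaledLowerUnipotent ϖ m) := by
  constructor
  · intro x y h
    have := lowerUnipotent_injective (congrArg Subtype.val h)
    exact toAdd.injective (smul_right_injective _ (pow_ne_zero m hϖ) (ofAdd.injective this))
  · rintro ⟨n, hnN, ⟨w₀, hw₀⟩, ⟨w₁, hw₁⟩⟩
    refine ⟨ofAdd (w₀, w₁), Subtype.ext ?_⟩
    rw [coe_scaledLowerUnipotent, toAdd_ofAdd, ← hw₀, ← hw₁]
    exact lowerUnipotent_eq_of_mem_Nl hnN

theorem scaledLowerUnipotent_mem_Pm_succ_iff {ϖ : O} (hϖ : Irreducible ϖ) {m : ℕ}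
    (x : Multiplicative (O × O)) :
    (scaledLowerUnipotent ϖ m x : GL₃ O) ∈ Pm O ϖ (m + 1) ↔ residuePair O x = 1 := by
  rw [residuePair_eq_one_iff hϖ, mem_Pm_iff, coe_scaledLowerUnipotent]
  simp [pow_succ, mul_dvd_mul_iff_left (pow_ne_zero m hϖ.ne_zero)]

noncomputable def quotientNlInfPmEquiv {ϖ : O} (hϖ : Irreducible ϖ) (m : ℕ) :
    ↥(Nl O ⊓ Pm O ϖ m) ⧸ (Pm O ϖ (m + 1)).subgroupOf (Nl O ⊓ Pm O ϖ m) ≃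
      (O ⧸ maximalIdeal O) × (O ⧸ maximalIdeal O) :=
  let e := MulEquiv.ofBijective _ (scaledLowerUnipotent_bijective hϖ.ne_zero m)
  let φ := (residuePair O).comp e.symm.toMonoidHom
  have hker : φ.ker = (Pm O ϖ (m + 1)).subgroupOf (Nl O ⊓ Pm O ϖ m) := by
    ext n
    have hn : scaledLowerUnipotent ϖ m (e.symm n) = n := e.apply_symm_apply n
    rw [MonoidHom.mem_ker, Subgroup.mem_subgroupOf]
    change residuePair O (e.symm n) = 1 ↔ _
    rw [← scaledLowerUnipotent_mem_Pm_succ_iff hϖ, hn]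
  (Subgroup.quotientEquivOfEq hker.symm).trans <|
    (QuotientGroup.quotientKerEquivOfSurjective φ
      (residuePair_surjective.comp e.symm.surjective)).toEquiv.trans toAdd

end Parahoric

/-- the inclusion `N_l ∩ P(m) ↪ P(m)` induces a bijection
`(N_l ∩ P(m))/(N_l ∩ P(m+1)) ≅ P(m)/P(m+1)`; both quotients have cardinality `q²`
(`q` the residue cardinality), the quotient is in bijection with `(O/ϖ)²`, and the
regular representation of this quotient decomposes into its `q²` characters, each with
multiplicity one (there are exactly `q²` characters). -/
theorem quotient_parahoric_description
    (O : Type) [CommRing O] [IsDomain O] [IsDiscreteValuationRing O]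
    (ϖ : O) (hϖ : Irreducible ϖ) (m : ℕ) (hm : 1 ≤ m)
    (q : ℕ) (hq : q = Nat.card (O ⧸ IsLocalRing.maximalIdeal O)) :
    -- every coset of `P(m+1)` in `P(m)` has a representative in `N_l ∩ P(m)` …
    (∀ g ∈ Pm O ϖ m, ∃ n ∈ Nl O ⊓ Pm O ϖ m, n⁻¹ * g ∈ Pm O ϖ (m + 1)) ∧
    -- … which is unique modulo `N_l ∩ P(m+1)`
    (∀ n₁ ∈ Nl O ⊓ Pm O ϖ m, ∀ n₂ ∈ Nl O ⊓ Pm O ϖ m,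
      (n₁⁻¹ * n₂ ∈ Pm O ϖ (m + 1) ↔ n₁⁻¹ * n₂ ∈ Nl O ⊓ Pm O ϖ (m + 1))) ∧
    -- both quotients have cardinality q²
    ((Pm O ϖ (m + 1)).subgroupOf (Pm O ϖ m)).index = q ^ 2 ∧
    ((Nl O ⊓ Pm O ϖ (m + 1)).subgroupOf (Nl O ⊓ Pm O ϖ m)).index = q ^ 2 ∧
    -- the quotient is (O/ϖ)²
    Nonempty ((↥(Pm O ϖ m) ⧸ (Pm O ϖ (m + 1)).subgroupOf (Pm O ϖ m)) ≃
      ((O ⧸ IsLocalRing.maximalIdeal O) × (O ⧸ IsLocalRing.maximalIdeal O))) ∧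
    -- the abelian group (O/ϖ)² has exactly q² characters (each occurring once in the
    -- regular representation)
    Nat.card (Multiplicative
        ((O ⧸ IsLocalRing.maximalIdeal O) × (O ⧸ IsLocalRing.maximalIdeal O)) →* ℂˣ)
      = q ^ 2 := by
  have hrep (g) (hg : g ∈ Pm O ϖ m) := exists_mem_Nl_inf_Pm_inv_mul_mem_Pm hϖ hm hg (m + 1)
  let eNl := quotientNlInfPmEquiv hϖ m
  let ePm := (Subgroup.quotientSubgroupOfEquivOfLE _ inf_le_right hrep).symm.trans eNl
  have hcard : Nat.card ((O ⧸ maximalIdeal O) × (O ⧸ maximalIdeal O)) = q ^ 2 := by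
    rw [Nat.card_prod, hq, sq]
  rw [Subgroup.inf_subgroupOf_of_le inf_le_left, Subgroup.index_eq_card, Subgroup.index_eq_card,
    Nat.card_congr ePm, Nat.card_congr eNl, card_monoidHom_units_complex, hcard]
  exact ⟨hrep,
    fun n₁ h₁ n₂ h₂ => ⟨fun h => ⟨(Nl O).mul_mem ((Nl O).inv_mem h₁.1) h₂.1, h⟩, fun h => h.2⟩,
    rfl, rfl, ⟨ePm⟩, rfl⟩
end

section
/- Let R = O_F/𝔭^i be a finite quotient of the ring of integers of a local field (a finite local ring with principal maximal ideal (ϖ) and ϖ^i = 0), and let P(R) ⊂ GL_3(R) be the (2,1) block upper-triangular parabolic subgroup. Identify GL_3(R)/P(R) with the set of unimodular triples [s₁,s₂,s₃] up to unit scaling (projective plane over R). For 0 ≤ j ≤ i−1 let A_j be the set of classes with s₃ ∈ (ϖ^j) \ (ϖ^{j+1}), and A_i the set with s₃ = 0. Then each A_j (0 ≤ j ≤ i) is a single orbit for the left action of P(R), and these are exactly the P(R)-orbits on GL_3(R)/P(R); in particular the number of (P(R), P(R)) double cosets in GL_3(R) is i + 1. -/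
open Matrix

section Aux

variable {R : Type} [CommRing R]

/-- In a local ring, equal principal ideals implies associated generators. -/
lemma span_singleton_eq_unit [IsLocalRing R] {a b : R}
    (h : Ideal.span ({a} : Set R) = Ideal.span {b}) : ∃ ε : Rˣ, (ε : R) * a = b := by
  obtain ⟨c, hc⟩ := Ideal.span_singleton_le_span_singleton.mp h.le
  obtain ⟨d, hd⟩ := Ideal.span_singleton_le_span_singleton.mp h.ge
  rcases IsLocalRing.isUnit_or_isUnit_one_sub_self (c * d) with hu | hu
  · have hdu : IsUnit d := isUnit_of_mul_isUnit_right hu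
    exact ⟨hdu.unit, by rw [hdu.unit_spec, hd, hc]; ring⟩
  · have hb0 : b = 0 := by
      have h0 : (1 - c * d) * b = 0 := by linear_combination hd + d * hc
      exact (hu.mul_right_eq_zero).mp h0
    have ha0 : a = 0 := by rw [hc, hb0, zero_mul]
    exact ⟨1, by simp [ha0, hb0]⟩

lemma mulVec_three (M : Matrix (Fin 3) (Fin 3) R) (x : Fin 3 → R) :
    M.mulVec x = ![M 0 0 * x 0 + M 0 1 * x 1 + M 0 2 * x 2,
      M 1 0 * x 0 + M 1 1 * x 1 + M 1 2 * x 2,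
      M 2 0 * x 0 + M 2 1 * x 1 + M 2 2 * x 2] := by
  funext j
  fin_cases j <;> simp [Matrix.mulVec, dotProduct, Fin.sum_univ_three]

/-- Reduction: a unimodular vector can be moved by the parabolic to `![1,0,v 2]`. -/
lemma reduce_to_normal (v : Fin 3 → R) (hv : ∃ j, IsUnit (v j)) :
    ∃ p : Matrix (Fin 3) (Fin 3) R, IsUnit p ∧ p 2 0 = 0 ∧ p 2 1 = 0 ∧
      p.mulVec v = ![1, 0, v 2] := by
  obtain ⟨j, hj⟩ := hv
  fin_cases j
  · -- v 0 is a unit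
    replace hj : IsUnit (v 0) := hj
    obtain ⟨u, hu⟩ := hj
    refine ⟨!![(↑u⁻¹ : R), 0, 0; v 1, -(↑u : R), 0; 0, 0, 1], ?_, by simp [Matrix.vecHead, Matrix.vecTail], by simp [Matrix.vecHead, Matrix.vecTail], ?_⟩
    · rw [Matrix.isUnit_iff_isUnit_det]
      simp [Matrix.det_fin_three, Matrix.vecHead, Matrix.vecTail]
    · rw [mulVec_three]
      funext k
      fin_cases k
      · show (↑u⁻¹ : R) * v 0 + 0 * v 1 + 0 * v 2 = 1
        linear_combination (↑u⁻¹ : R) * hu.symm + u.inv_mul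
      · show v 1 * v 0 + -(↑u : R) * v 1 + 0 * v 2 = 0
        linear_combination v 1 * hu.symm
      · show 0 * v 0 + 0 * v 1 + 1 * v 2 = v 2
        ring
  · -- v 1 is a unit
    replace hj : IsUnit (v 1) := hj
    obtain ⟨u, hu⟩ := hj
    refine ⟨!![0, (↑u⁻¹ : R), 0; (↑u : R), -(v 0), 0; 0, 0, 1], ?_, by simp [Matrix.vecHead, Matrix.vecTail], by simp [Matrix.vecHead, Matrix.vecTail], ?_⟩
    · rw [Matrix.isUnit_iff_isUnit_det]
      simp [Matrix.det_fin_three, Matrix.vecHead, Matrix.vecTail]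
    · rw [mulVec_three]
      funext k
      fin_cases k
      · show (0 : R) * v 0 + (↑u⁻¹ : R) * v 1 + 0 * v 2 = 1
        linear_combination (↑u⁻¹ : R) * hu.symm + u.inv_mul
      · show (↑u : R) * v 0 + -(v 0) * v 1 + 0 * v 2 = 0
        linear_combination v 0 * hu
      · show (0 : R) * v 0 + 0 * v 1 + 1 * v 2 = v 2
        ring
  · -- v 2 is a unit
    replace hj : IsUnit (v 2) := hj
    obtain ⟨u, hu⟩ := hj
    refine ⟨!![1, 0, (↑u⁻¹ : R) * (1 - v 0); 0, 1, -((↑u⁻¹ : R) * v 1); 0, 0, 1],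
      ?_, by simp [Matrix.vecHead, Matrix.vecTail], by simp [Matrix.vecHead, Matrix.vecTail], ?_⟩
    · rw [Matrix.isUnit_iff_isUnit_det]
      simp [Matrix.det_fin_three, Matrix.vecHead, Matrix.vecTail]
    · rw [mulVec_three]
      funext k
      fin_cases k
      · show (1 : R) * v 0 + 0 * v 1 + (↑u⁻¹ : R) * (1 - v 0) * v 2 = 1
        linear_combination (↑u⁻¹ : R) * (1 - v 0) * hu.symm + (1 - v 0) * u.inv_mul
      · show (0 : R) * v 0 + 1 * v 1 + -((↑u⁻¹ : R) * v 1) * v 2 = 0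
        linear_combination (-(↑u⁻¹ : R) * v 1) * hu.symm - v 1 * u.inv_mul
      · show (0 : R) * v 0 + 0 * v 1 + 1 * v 2 = v 2
        ring

/-- Reverse reduction: `![1,0,v 2]` can be moved by the parabolic to `v`. -/
lemma normal_to_vector (v : Fin 3 → R) (hv : ∃ j, IsUnit (v j)) :
    ∃ p : Matrix (Fin 3) (Fin 3) R, IsUnit p ∧ p 2 0 = 0 ∧ p 2 1 = 0 ∧
      p.mulVec ![1, 0, v 2] = v := by
  obtain ⟨j, hj⟩ := hv
  fin_cases j
  · replace hj : IsUnit (v 0) := hj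
    refine ⟨!![v 0, 0, 0; v 1, 1, 0; 0, 0, 1], ?_, by simp [Matrix.vecHead, Matrix.vecTail], by simp [Matrix.vecHead, Matrix.vecTail], ?_⟩
    · have hd : (!![v 0, 0, 0; v 1, 1, 0; 0, 0, 1] : Matrix (Fin 3) (Fin 3) R).det = v 0 := by
        simp [Matrix.det_fin_three, Matrix.vecHead, Matrix.vecTail]
      rw [Matrix.isUnit_iff_isUnit_det, hd]
      exact hj
    · rw [mulVec_three]
      funext k
      fin_cases k
      · show v 0 * 1 + 0 * 0 + 0 * v 2 = v 0; ring
      · show v 1 * 1 + 1 * 0 + 0 * v 2 = v 1; ring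
      · show (0 : R) * 1 + 0 * 0 + 1 * v 2 = v 2; ring
  · replace hj : IsUnit (v 1) := hj
    refine ⟨!![v 0, 1, 0; v 1, 0, 0; 0, 0, 1], ?_, by simp [Matrix.vecHead, Matrix.vecTail], by simp [Matrix.vecHead, Matrix.vecTail], ?_⟩
    · have hd : (!![v 0, 1, 0; v 1, 0, 0; 0, 0, 1] : Matrix (Fin 3) (Fin 3) R).det = -(v 1) := by
        simp [Matrix.det_fin_three, Matrix.vecHead, Matrix.vecTail]
      rw [Matrix.isUnit_iff_isUnit_det, hd]
      exact hj.neg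
    · rw [mulVec_three]
      funext k
      fin_cases k
      · show v 0 * 1 + 1 * 0 + 0 * v 2 = v 0; ring
      · show v 1 * 1 + 0 * 0 + 0 * v 2 = v 1; ring
      · show (0 : R) * 1 + 0 * 0 + 1 * v 2 = v 2; ring
  · replace hj : IsUnit (v 2) := hj
    obtain ⟨u, hu⟩ := hj
    refine ⟨!![1, 0, (↑u⁻¹ : R) * (v 0 - 1); 0, 1, (↑u⁻¹ : R) * v 1; 0, 0, 1],
      ?_, by simp [Matrix.vecHead, Matrix.vecTail], by simp [Matrix.vecHead, Matrix.vecTail], ?_⟩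
    · have hd : (!![1, 0, (↑u⁻¹ : R) * (v 0 - 1); 0, 1, (↑u⁻¹ : R) * v 1; 0, 0, 1] :
          Matrix (Fin 3) (Fin 3) R).det = 1 := by
        simp [Matrix.det_fin_three, Matrix.vecHead, Matrix.vecTail]
      rw [Matrix.isUnit_iff_isUnit_det, hd]
      exact isUnit_one
    · rw [mulVec_three]
      funext k
      fin_cases k
      · show (1 : R) * 1 + 0 * 0 + (↑u⁻¹ : R) * (v 0 - 1) * v 2 = v 0
        linear_combination (↑u⁻¹ : R) * (v 0 - 1) * hu.symm + (v 0 - 1) * u.inv_mul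
      · show (0 : R) * 1 + 1 * 0 + (↑u⁻¹ : R) * v 1 * v 2 = v 1
        linear_combination (↑u⁻¹ : R) * v 1 * hu.symm + v 1 * u.inv_mul
      · show (0 : R) * 1 + 0 * 0 + 1 * v 2 = v 2
        ring

end Aux

/-- Let `R` be a finite local principal ideal ring with maximal ideal
`(ϖ)`, `ϖ^i = 0`, `ϖ^(i-1) ≠ 0` (`i ≥ 1`). Identify `GL₃(R)/P(R)` with the projective
plane of unimodular vectors up to unit scaling. Two unimodular vectors `v, w` lie in the
same orbit of the `(2,1)` block upper-triangular parabolic `P(R)` if and only if their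
third coordinates generate the same ideal `(ϖ^j)`; the sets `A_j` (`0 ≤ j ≤ i`) are
exactly the orbits, so there are exactly `i + 1` of them, i.e. `i + 1`
`(P(R), P(R))`-double cosets in `GL₃(R)`. -/
theorem parabolic_orbits_on_projective_plane
    {R : Type} [CommRing R] [IsLocalRing R] [Finite R]
    (ϖ : R) (hmax : IsLocalRing.maximalIdeal R = Ideal.span {ϖ})
    (i : ℕ) (hi : 1 ≤ i) (hnilp : ϖ ^ i = 0) (hne : ϖ ^ (i - 1) ≠ 0) :
    (∀ v w : Fin 3 → R, (∃ j, IsUnit (v j)) → (∃ j, IsUnit (w j)) →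
      ((∃ p : Matrix (Fin 3) (Fin 3) R, IsUnit p ∧ p 2 0 = 0 ∧ p 2 1 = 0 ∧
          ∃ u : Rˣ, (u : R) • p.mulVec v = w)
        ↔ Ideal.span {v 2} = Ideal.span {w 2})) ∧
    Set.ncard ((fun j : ℕ => Ideal.span ({ϖ ^ j} : Set R)) '' Set.Iic i) = i + 1 := by
  constructor
  · intro v w hv hw
    constructor
    · rintro ⟨p, hp, hp20, hp21, u, hu⟩
      have h2 : p.mulVec v 2 = p 2 0 * v 0 + p 2 1 * v 1 + p 2 2 * v 2 := by
        rw [mulVec_three]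
        simp [Matrix.vecHead, Matrix.vecTail]
      have h3 := congrFun hu 2
      simp only [Pi.smul_apply, smul_eq_mul] at h3
      rw [h2, hp20, hp21] at h3
      have hw2 : w 2 = ↑u * p 2 2 * v 2 := by linear_combination -h3
      have hdet : IsUnit p.det := (Matrix.isUnit_iff_isUnit_det p).mp hp
      have hform : p.det = p 2 2 * (p 0 0 * p 1 1 - p 0 1 * p 1 0) := by
        rw [Matrix.det_fin_three, hp20, hp21]; ring
      rw [hform] at hdet
      have hp22 : IsUnit (p 2 2) := isUnit_of_mul_isUnit_left hdet
      obtain ⟨κ, hκeq⟩ := u.isUnit.mul hp22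
      apply le_antisymm <;> rw [Ideal.span_singleton_le_span_singleton]
      · refine ⟨↑κ⁻¹, ?_⟩
        rw [hw2, ← hκeq]
        linear_combination (-(v 2)) * κ.mul_inv
      · exact ⟨↑u * p 2 2, by rw [hw2]; ring⟩
    · intro hspan
      obtain ⟨ε, hε⟩ := span_singleton_eq_unit hspan
      obtain ⟨p, hp, hp20, hp21, hpv⟩ := reduce_to_normal v hv
      obtain ⟨q, hq, hq20, hq21, hqw⟩ := normal_to_vector w hw
      set r : Matrix (Fin 3) (Fin 3) R := !![(↑ε⁻¹ : R), 0, 0; 0, 1, 0; 0, 0, 1] with hr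
      have hr20 : r 2 0 = 0 := by simp [hr, Matrix.vecHead, Matrix.vecTail]
      have hr21 : r 2 1 = 0 := by simp [hr, Matrix.vecHead, Matrix.vecTail]
      have hr22 : r 2 2 = 1 := by simp [hr, Matrix.vecHead, Matrix.vecTail]
      have hrunit : IsUnit r := by
        rw [Matrix.isUnit_iff_isUnit_det]
        have : r.det = (↑ε⁻¹ : R) := by
          simp [hr, Matrix.det_fin_three, Matrix.vecHead, Matrix.vecTail]
        rw [this]
        exact ε⁻¹.isUnit
      have hqr0 : (q * r) 2 0 = 0 := by
        rw [Matrix.mul_apply, Fin.sum_univ_three, hq20, hq21, hr20]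
        ring
      have hqr1 : (q * r) 2 1 = 0 := by
        rw [Matrix.mul_apply, Fin.sum_univ_three, hq20, hq21, hr21]
        ring
      refine ⟨q * r * p, (hq.mul hrunit).mul hp, ?_, ?_, ε, ?_⟩
      · rw [Matrix.mul_apply, Fin.sum_univ_three, hqr0, hqr1, hp20]
        ring
      · rw [Matrix.mul_apply, Fin.sum_univ_three, hqr0, hqr1, hp21]
        ring
      · have hassoc : (q * r * p).mulVec v = q.mulVec (r.mulVec (p.mulVec v)) := by
          rw [Matrix.mulVec_mulVec, Matrix.mulVec_mulVec]
        have hr1 : r.mulVec ![1, 0, v 2] = ![(↑ε⁻¹ : R), 0, v 2] := by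
          rw [mulVec_three]
          funext k
          fin_cases k
          · show (↑ε⁻¹ : R) * 1 + 0 * 0 + 0 * v 2 = (↑ε⁻¹ : R); ring
          · show (0 : R) * 1 + 1 * 0 + 0 * v 2 = 0; ring
          · show (0 : R) * 1 + 0 * 0 + 1 * v 2 = v 2; ring
        have hs : (↑ε : R) • (![(↑ε⁻¹ : R), 0, v 2] : Fin 3 → R) = ![1, 0, w 2] := by
          funext k
          fin_cases k
          · show (↑ε : R) * (↑ε⁻¹ : R) = 1; exact ε.mul_inv
          · show (↑ε : R) * 0 = 0; exact mul_zero _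
          · show (↑ε : R) * v 2 = w 2; exact hε
        rw [hassoc, hpv, hr1, ← Matrix.mulVec_smul, hs, hqw]
  · -- counting the ideals
    have hϖ : ¬ IsUnit ϖ := by
      intro h
      have h2 : IsUnit (ϖ ^ i) := h.pow i
      rw [hnilp] at h2
      exact not_isUnit_zero h2
    have key : ∀ a b : ℕ, a < b → b ≤ i →
        Ideal.span ({ϖ ^ a} : Set R) = Ideal.span {ϖ ^ b} → False := by
      intro a b hlt hbi hab
      obtain ⟨c, hc⟩ := Ideal.span_singleton_le_span_singleton.mp hab.le
      have hb' : b = a + (b - a) := by omega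
      rw [hb', pow_add] at hc
      have h0 : (1 - ϖ ^ (b - a) * c) * ϖ ^ a = 0 := by linear_combination hc
      have hnu : ¬ IsUnit (ϖ ^ (b - a) * c) := by
        intro hcu
        exact hϖ ((isUnit_pow_iff (by omega : b - a ≠ 0)).mp
          (isUnit_of_mul_isUnit_left hcu))
      have hu1 : IsUnit (1 - ϖ ^ (b - a) * c) := by
        rcases IsLocalRing.isUnit_or_isUnit_one_sub_self (ϖ ^ (b - a) * c) with h' | h'
        · exact absurd h' hnu
        · exact h'
      have ha0 : ϖ ^ a = 0 := hu1.mul_right_eq_zero.mp h0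
      apply hne
      have hsplit : ϖ ^ (i - 1) = ϖ ^ a * ϖ ^ (i - 1 - a) := by
        rw [← pow_add]; congr 1; omega
      rw [hsplit, ha0, zero_mul]
    have hinj : Set.InjOn (fun j : ℕ => Ideal.span ({ϖ ^ j} : Set R)) (Set.Iic i) := by
      intro a ha b hb hab
      simp only [Set.mem_Iic] at ha hb
      by_contra hne'
      rcases Nat.lt_or_ge a b with h | h
      · exact key a b h hb hab
      · exact key b a (by omega) ha hab.symm
    rw [Set.ncard_image_of_injOn hinj, ← Finset.coe_Iic, Set.ncard_coe_finset, Nat.card_Iic]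
end

section
/- With B(i) ⊂ GL_3(O_F) the congruence subgroup given by lower entries g₂₁ ∈ ϖ^{n₁+i}O_F, g₃₂ ∈ ϖ^{n₂+i}O_F, g₃₁ ∈ ϖ^{n₃+i}O_F and unit diagonal mod ϖ, and assuming n₃ ≥ n₁: for every upper block-unipotent n⁺ = [[1,0,u₁],[0,1,u₂],[0,0,1]] (u₁,u₂ ∈ O_F) and every n⁻ = [[1,0,0],[0,1,0],[ϖ^{n₃+i}v₁, ϖ^{n₂+i}v₂, 1]], the element n⁻ n⁺ (n⁻)^{-1} (n⁺)^{-1} lies in B(i+1)·(B(i) ∩ M), where M is the block-diagonal Levi diag(GL_2, GL_1); more precisely n⁻ n⁺ (n⁻)^{-1} factors as a product of an element of B(i) ∩ M (with (2,1) entry in ϖ^{n₃+i}O_F ⊆ ϖ^{n₁+i}O_F), the original n⁺, and an element of N_l ∩ B(i+1). -/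
/-!
Write `n⁻ = [[1, 0], [w, 1]]`, `n⁺ = [[1, u], [0, 1]]` in block form with `w = (a, c)` and
`t = w u`. Then `n⁻ n⁺ (n⁻)⁻¹ (n⁺)⁻¹ = [[1 - u w, t u], [-t w, 1 + t + t²]]`. Splitting off the
Levi element `diag(1 - u w, 1)` on the right leaves the lower row `-t w (1 - u w)⁻¹`, which equals
`-t (1 - t)⁻¹ w` because `w (1 - u w) = (1 - t) w`. Since `ϖ ∣ t`, this row lies one power of `ϖ`
deeper than `w`, and all diagonal entries are of the form `1 + (multiple of ϖ)`, hence units in the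
local ring `O`.
-/

open Matrix

namespace Matrix

variable {R : Type*} [CommRing R]

def upperUnipotent (u₁ u₂ : R) : Matrix (Fin 3) (Fin 3) R := !![1, 0, u₁; 0, 1, u₂; 0, 0, 1]

def lowerUnipotent (a c : R) : Matrix (Fin 3) (Fin 3) R := !![1, 0, 0; 0, 1, 0; a, c, 1]

theorem upperUnipotent_mul_neg (u₁ u₂ : R) :
    upperUnipotent u₁ u₂ * upperUnipotent (-u₁) (-u₂) = 1 := by
  rw [upperUnipotent, upperUnipotent, mul_fin_three, one_fin_three]
  simp

theorem lowerUnipotent_mul_neg (a c : R) :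
    lowerUnipotent a c * lowerUnipotent (-a) (-c) = 1 := by
  rw [lowerUnipotent, lowerUnipotent, mul_fin_three, one_fin_three]
  simp

theorem isUnit_upperUnipotent (u₁ u₂ : R) : IsUnit (upperUnipotent u₁ u₂) :=
  IsUnit.of_mul_eq_one _ (upperUnipotent_mul_neg u₁ u₂)

theorem isUnit_lowerUnipotent (a c : R) : IsUnit (lowerUnipotent a c) :=
  IsUnit.of_mul_eq_one _ (lowerUnipotent_mul_neg a c)

def leviFactor (a c u₁ u₂ : R) : Matrix (Fin 3) (Fin 3) R :=
  !![1 - u₁ * a, -(u₁ * c), 0; -(u₂ * a), 1 - u₂ * c, 0; 0, 0, 1]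

def congruenceFactor (a c u₁ u₂ e : R) : Matrix (Fin 3) (Fin 3) R :=
  !![1, 0, (a * u₁ + c * u₂) * u₁;
     0, 1, (a * u₁ + c * u₂) * u₂;
     -((a * u₁ + c * u₂) * a * e), -((a * u₁ + c * u₂) * c * e),
       1 + (a * u₁ + c * u₂) * (1 + (a * u₁ + c * u₂))]

theorem commutator_eq_congruenceFactor_mul_leviFactor {a c u₁ u₂ e : R}
    (he : (1 - (a * u₁ + c * u₂)) * e = 1) :
    lowerUnipotent a c * upperUnipotent u₁ u₂ * lowerUnipotent (-a) (-c) *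
      upperUnipotent (-u₁) (-u₂) = congruenceFactor a c u₁ u₂ e * leviFactor a c u₁ u₂ := by
  simp only [lowerUnipotent, upperUnipotent, congruenceFactor, leviFactor, mul_fin_three]
  congr 1
  simp only [mul_one, mul_zero, add_zero, one_mul, zero_mul, mul_neg, zero_add, neg_mul, neg_neg,
    neg_zero, vecCons_inj, and_true, true_and]
  refine ⟨⟨by ring, by ring⟩, ⟨by ring, by ring⟩, ?_, ?_, by ring⟩
  · linear_combination (a * u₁ + c * u₂) * a * he
  · linear_combination (a * u₁ + c * u₂) * c * he

end Matrix

section IsLocalRing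

variable {R : Type*} [CommRing R] [IsLocalRing R] {ϖ x : R}

theorem isUnit_one_sub_of_dvd (hϖ : ¬IsUnit ϖ) (hx : ϖ ∣ x) : IsUnit (1 - x) := by
  obtain ⟨y, rfl⟩ := hx
  exact IsLocalRing.isUnit_one_sub_self_of_mem_nonunits _ (mul_mem_nonunits_left hϖ)

theorem isUnit_one_add_of_dvd (hϖ : ¬IsUnit ϖ) (hx : ϖ ∣ x) : IsUnit (1 + x) := by
  simpa using isUnit_one_sub_of_dvd hϖ (dvd_neg.mpr hx)

end IsLocalRing

theorem commutator_in_deeper_congruence_times_levi_general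
    {O : Type} [CommRing O] [IsDomain O] [IsDiscreteValuationRing O]
    (ϖ : O) (hϖ : Irreducible ϖ)
    (n₁ n₂ n₃ : ℕ) (h₂ : 0 < n₂) (h₃ : 0 < n₃)
    (h13 : n₁ ≤ n₃) (i : ℕ) (u₁ u₂ v₁ v₂ : O) :
    let np : Matrix (Fin 3) (Fin 3) O := !![1, 0, u₁; 0, 1, u₂; 0, 0, 1]
    let npi : Matrix (Fin 3) (Fin 3) O := !![1, 0, -u₁; 0, 1, -u₂; 0, 0, 1]
    let nm : Matrix (Fin 3) (Fin 3) O :=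
      !![1, 0, 0; 0, 1, 0; ϖ ^ (n₃ + i) * v₁, ϖ ^ (n₂ + i) * v₂, 1]
    let nmi : Matrix (Fin 3) (Fin 3) O :=
      !![1, 0, 0; 0, 1, 0; -(ϖ ^ (n₃ + i) * v₁), -(ϖ ^ (n₂ + i) * v₂), 1]
    np * npi = 1 ∧ nm * nmi = 1 ∧
    ∃ b mm : Matrix (Fin 3) (Fin 3) O,
      -- `mm` is block diagonal and lies in `B(i) ∩ M`
      (mm 0 2 = 0 ∧ mm 1 2 = 0 ∧ mm 2 0 = 0 ∧ mm 2 1 = 0 ∧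
        IsUnit (mm 0 0) ∧ IsUnit (mm 1 1) ∧ IsUnit (mm 2 2) ∧
        ϖ ^ (n₁ + i) ∣ mm 1 0) ∧
      -- `b` lies in `B(i+1)`
      (IsUnit b ∧ IsUnit (b 0 0) ∧ IsUnit (b 1 1) ∧ IsUnit (b 2 2) ∧
        ϖ ^ (n₁ + i + 1) ∣ b 1 0 ∧ ϖ ^ (n₂ + i + 1) ∣ b 2 1 ∧
        ϖ ^ (n₃ + i + 1) ∣ b 2 0) ∧
      nm * np * nmi * npi = b * mm := by
  intro np npi nm nmi
  set a := ϖ ^ (n₃ + i) * v₁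
  set c := ϖ ^ (n₂ + i) * v₂
  have hϖ : ¬IsUnit ϖ := hϖ.not_isUnit
  have ha : ϖ ∣ a := (dvd_pow_self ϖ (by omega)).mul_right v₁
  have hc : ϖ ∣ c := (dvd_pow_self ϖ (by omega)).mul_right v₂
  have ht : ϖ ∣ a * u₁ + c * u₂ := (ha.mul_right u₁).add (hc.mul_right u₂)
  obtain ⟨e, he⟩ := (isUnit_one_sub_of_dvd hϖ ht).exists_right_inv
  have hcomm := commutator_eq_congruenceFactor_mul_leviFactor (u₁ := u₁) (u₂ := u₂) he
  have hunit : IsUnit (nm * np * nmi * npi) :=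
    (((isUnit_lowerUnipotent a c).mul (isUnit_upperUnipotent u₁ u₂)).mul
      (isUnit_lowerUnipotent _ _)).mul (isUnit_upperUnipotent _ _)
  refine ⟨upperUnipotent_mul_neg u₁ u₂, lowerUnipotent_mul_neg a c,
    congruenceFactor a c u₁ u₂ e, leviFactor a c u₁ u₂,
    ⟨rfl, rfl, rfl, rfl, isUnit_one_sub_of_dvd hϖ (ha.mul_left u₁),
      isUnit_one_sub_of_dvd hϖ (hc.mul_left u₂), isUnit_one, ?_⟩,
    ⟨isUnit_of_mul_isUnit_left (hcomm ▸ hunit), isUnit_one, isUnit_one,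
      isUnit_one_add_of_dvd hϖ (ht.mul_right _), dvd_zero _, ?_, ?_⟩, hcomm⟩
  · exact dvd_neg.mpr (((pow_dvd_pow ϖ (by omega)).mul_right v₁).mul_left u₂)
  · exact dvd_neg.mpr ((pow_succ' ϖ _ ▸ mul_dvd_mul ht (dvd_mul_right _ v₂)).mul_right e)
  · exact dvd_neg.mpr ((pow_succ' ϖ _ ▸ mul_dvd_mul ht (dvd_mul_right _ v₁)).mul_right e)

/-- With `B(i)` the congruence subgroup with lower entries divisible by
`ϖ^{n₁+i}, ϖ^{n₂+i}, ϖ^{n₃+i}` and `n₃ = max (n₁, n₂, n₃)`, for every integral upper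
block-unipotent `n⁺` and every `n⁻` in the lower congruence unipotent of level `i`, the
commutator `n⁻ n⁺ (n⁻)⁻¹ (n⁺)⁻¹` lies in `B(i+1)·(B(i) ∩ M)`, where `M` is the
block-diagonal Levi `GL₂ × GL₁`: explicitly `n⁻ n⁺ (n⁻)⁻¹ (n⁺)⁻¹ = b * mm` with `mm`
block diagonal lying in `B(i) ∩ M` and `b ∈ B(i+1)`. -/
theorem commutator_in_deeper_congruence_times_levi
    {O : Type} [CommRing O] [IsDomain O] [IsDiscreteValuationRing O]
    (ϖ : O) (hϖ : Irreducible ϖ)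
    (n₁ n₂ n₃ : ℕ) (h₁ : 0 < n₁) (h₂ : 0 < n₂) (h₃ : 0 < n₃)
    (h13 : n₁ ≤ n₃) (h23 : n₂ ≤ n₃) (i : ℕ) (u₁ u₂ v₁ v₂ : O) :
    let np : Matrix (Fin 3) (Fin 3) O := !![1, 0, u₁; 0, 1, u₂; 0, 0, 1]
    let npi : Matrix (Fin 3) (Fin 3) O := !![1, 0, -u₁; 0, 1, -u₂; 0, 0, 1]
    let nm : Matrix (Fin 3) (Fin 3) O :=
      !![1, 0, 0; 0, 1, 0; ϖ ^ (n₃ + i) * v₁, ϖ ^ (n₂ + i) * v₂, 1]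
    let nmi : Matrix (Fin 3) (Fin 3) O :=
      !![1, 0, 0; 0, 1, 0; -(ϖ ^ (n₃ + i) * v₁), -(ϖ ^ (n₂ + i) * v₂), 1]
    np * npi = 1 ∧ nm * nmi = 1 ∧
    ∃ b mm : Matrix (Fin 3) (Fin 3) O,
      -- `mm` is block diagonal and lies in `B(i) ∩ M`
      (mm 0 2 = 0 ∧ mm 1 2 = 0 ∧ mm 2 0 = 0 ∧ mm 2 1 = 0 ∧
        IsUnit (mm 0 0) ∧ IsUnit (mm 1 1) ∧ IsUnit (mm 2 2) ∧
        ϖ ^ (n₁ + i) ∣ mm 1 0) ∧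
      -- `b` lies in `B(i+1)`
      (IsUnit b ∧ IsUnit (b 0 0) ∧ IsUnit (b 1 1) ∧ IsUnit (b 2 2) ∧
        ϖ ^ (n₁ + i + 1) ∣ b 1 0 ∧ ϖ ^ (n₂ + i + 1) ∣ b 2 1 ∧
        ϖ ^ (n₃ + i + 1) ∣ b 2 0) ∧
      nm * np * nmi * npi = b * mm :=
  commutator_in_deeper_congruence_times_levi_general ϖ hϖ n₁ n₂ n₃ h₂ h₃ h13 i u₁ u₂ v₁ v₂
end
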